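/- Suppose ‖N(δ) + I(δ)‖₂ ≤ C δ^{J+1} for all δ ∈ (0, Δ̄), where I(δ) is invertible with ‖I^{-1}(δ)‖₂ ≤ c/δ for some constant c > 0. Then there exist constants C₁ > 0 and Δ > 0 such that ‖N^{-1}(δ) I(δ) + E_d‖₂ ≤ C₁ δ^J for all δ ∈ (0, Δ). -/

import Mathlib

/-!
With `t = I⁻¹ (N + I)` we have `N = -I (1 - t)`, hence `N⁻¹ I + 1 = 1 - (1 - t)⁻¹`.
The hypotheses give `‖t‖ ≤ ‖I⁻¹‖ ‖N + I‖ ≤ c C δ^J`, which is at most `1/2` for small `δ`;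
then `1 - t` is invertible and `‖(1 - t)⁻¹ - 1‖ ≤ ‖t‖ / (1 - ‖t‖) ≤ 2 ‖t‖`.
-/

open scoped Matrix.Norms.L2Operator Ring

section Ring

variable {R : Type*} [Ring R]

theorem Ring.inverse_mul_eq_neg_inverse_one_sub {a b : R} (ha : IsUnit a)
    (ht : IsUnit (1 - a⁻¹ʳ * (b + a))) :
    b⁻¹ʳ * a = -(1 - a⁻¹ʳ * (b + a))⁻¹ʳ := by
  set t := a⁻¹ʳ * (b + a)
  have hb : b = -(a * (1 - t)) := by
    rw [mul_sub, mul_one, mul_inverse_cancel_left _ _ ha]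
    abel
  have hbu : IsUnit b := hb ▸ (ha.mul ht).neg
  rw [inverse_mul_eq_iff_eq_mul _ _ _ hbu, hb, neg_mul_neg, mul_assoc,
    mul_inverse_cancel _ ht, mul_one]

end Ring

section NormedRing

variable {R : Type*} [NormedRing R] [HasSummableGeomSeries R]

theorem norm_inverse_one_sub_sub_one_le {t : R} (ht : ‖t‖ < 1) :
    ‖(1 - t)⁻¹ʳ - 1‖ ≤ ‖t‖ / (1 - ‖t‖) := by
  set x := (1 - t)⁻¹ʳ - 1
  -- `(1 - t)⁻¹ʳ (1 - t) = 1` gives `x = t + x t`; this avoids `‖1‖`, which need not be `1`.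
  have hx : x = t + x * t := by
    have h := Ring.inverse_mul_cancel _ (isUnit_one_sub_of_norm_lt_one ht)
    rw [mul_sub, mul_one] at h
    simp only [x, sub_mul, one_mul]
    linear_combination (norm := abel) h
  have hle : ‖x‖ ≤ ‖t‖ + ‖x‖ * ‖t‖ :=
    calc ‖x‖ = ‖t + x * t‖ := by rw [← hx]
      _ ≤ ‖t‖ + ‖x‖ * ‖t‖ := (norm_add_le _ _).trans (by gcongr; exact norm_mul_le _ _)
  rw [le_div_iff₀ (sub_pos.mpr ht)]
  linarith

theorem norm_inverse_mul_add_one_le {a b : R} (ha : IsUnit a)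
    (h : ‖a⁻¹ʳ‖ * ‖b + a‖ ≤ 1 / 2) :
    ‖b⁻¹ʳ * a + 1‖ ≤ 2 * (‖a⁻¹ʳ‖ * ‖b + a‖) := by
  set t := a⁻¹ʳ * (b + a)
  have ht : ‖t‖ ≤ 1 / 2 := (norm_mul_le _ _).trans h
  have ht1 : ‖t‖ < 1 := ht.trans_lt (by norm_num)
  rw [Ring.inverse_mul_eq_neg_inverse_one_sub ha (isUnit_one_sub_of_norm_lt_one ht1),
    neg_add_eq_sub, norm_sub_rev]
  calc ‖(1 - t)⁻¹ʳ - 1‖ ≤ ‖t‖ / (1 - ‖t‖) := norm_inverse_one_sub_sub_one_le ht1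
    _ ≤ 2 * ‖t‖ := by
      rw [div_le_iff₀ (by linarith)]
      nlinarith [norm_nonneg t]
    _ ≤ 2 * (‖a⁻¹ʳ‖ * ‖b + a‖) := by gcongr; exact norm_mul_le _ _

end NormedRing

/-- If `‖N(δ) + I(δ)‖₂ ≤ C δ^(J+1)` for `δ ∈ (0, Δ̄)`, where `I(δ)` is invertible
with `‖I(δ)⁻¹‖₂ ≤ c/δ`, then there are `C₁ > 0` and `Δ > 0` such that
`‖N(δ)⁻¹ I(δ) + E_d‖₂ ≤ C₁ δ^J` for all `δ ∈ (0, Δ)`. -/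
theorem approx_info_inverse_bound {d : ℕ} (N I : ℝ → Matrix (Fin d) (Fin d) ℝ)
    (J : ℕ) (hJ : 1 ≤ J) (C c Δbar : ℝ) (hc : 0 < c) (hΔbar : 0 < Δbar)
    (hI : ∀ δ ∈ Set.Ioo (0 : ℝ) Δbar, IsUnit (I δ) ∧ ‖(I δ)⁻¹‖ ≤ c / δ)
    (hN : ∀ δ ∈ Set.Ioo (0 : ℝ) Δbar, ‖N δ + I δ‖ ≤ C * δ ^ (J + 1)) :
    ∃ C₁ > (0 : ℝ), ∃ Δ > (0 : ℝ), ∀ δ ∈ Set.Ioo (0 : ℝ) Δ,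
      ‖(N δ)⁻¹ * I δ + 1‖ ≤ C₁ * δ ^ J := by
  set K := c * max C 1
  have hK : 0 < K := mul_pos hc (lt_max_of_lt_right one_pos)
  refine ⟨2 * K, by positivity, min Δbar (min 1 (1 / (2 * K))), by positivity, ?_⟩
  rintro δ ⟨hδ0, hδ⟩
  obtain ⟨hδΔbar, hδ1, hδK⟩ : δ < Δbar ∧ δ < 1 ∧ δ < 1 / (2 * K) := by
    simpa only [lt_min_iff] using hδ
  obtain ⟨hIu, hIinv⟩ := hI δ ⟨hδ0, hδΔbar⟩
  have hbound : ‖(I δ)⁻¹‖ * ‖N δ + I δ‖ ≤ K * δ ^ J :=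
    calc ‖(I δ)⁻¹‖ * ‖N δ + I δ‖ ≤ c / δ * (max C 1 * δ ^ (J + 1)) := by
          gcongr
          exact (hN δ ⟨hδ0, hδΔbar⟩).trans (by gcongr; exact le_max_left _ _)
      _ = K * δ ^ J := by field_simp; ring
  have hsmall : K * δ ^ J ≤ 1 / 2 := by
    have hpow : δ ^ J ≤ δ := pow_le_of_le_one hδ0.le hδ1.le (by omega)
    rw [lt_div_iff₀ (by positivity)] at hδK
    nlinarith
  simp only [Matrix.nonsing_inv_eq_ringInverse] at hbound ⊢
  calc ‖(N δ)⁻¹ʳ * I δ + 1‖ ≤ 2 * (‖(I δ)⁻¹ʳ‖ * ‖N δ + I δ‖) :=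
        norm_inverse_mul_add_one_le hIu (hbound.trans hsmall)
    _ ≤ 2 * K * δ ^ J := by linarith
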